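/- For every positive real λ and every nonnegative integer m, ∫₀¹ z^(4m+2) sin(λ z²) dz = ((-1)^m Γ(2m+3/2) / (2 λ^(2m+1))) · ( √(2/λ) · C(√(2λ/π)) − λ sin(λ) Σ_{j=0}^{m-1} (−1)^j λ^(2j)/Γ(2j+5/2) − cos(λ) Σ_{j=0}^{m} (−1)^j λ^(2j)/Γ(2j+3/2) ). -/

import Mathlib

open Real Finset

noncomputable def fresnelC (x : ℝ) : ℝ := ∫ t in (0:ℝ)..x, Real.cos (π * t ^ 2 / 2)

/-!
Two integrations by parts (against `z sin (λ z²)` and `z cos (λ z²)`, which are exact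
derivatives) express `∫₀¹ z ^ (4m + 6) sin (λ z²)` through `∫₀¹ z ^ (4m + 2) sin (λ z²)`, and
for `m = 0` one integration by parts leads to `∫₀¹ cos (λ z²)`, a Fresnel integral after the
substitution `t = z √(2λ/π)`. The closed form satisfies the same recurrence because
`Γ (s + 1) = s Γ (s)`.
-/

theorem integral_pow_add_two_mul_comp_mul_sq {f f' : ℝ → ℝ}
    (hf : ∀ x, HasDerivAt f (f' x) x) (hf' : Continuous f') {lam : ℝ} (hlam : lam ≠ 0)
    (n : ℕ) (b : ℝ) :
    ∫ z in (0:ℝ)..b, z ^ (n + 2) * f' (lam * z ^ 2) =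
      b ^ (n + 1) * f (lam * b ^ 2) / (2 * lam)
        - (n + 1) / (2 * lam) * ∫ z in (0:ℝ)..b, z ^ n * f (lam * z ^ 2) := by
  have hu : ∀ x ∈ Set.uIcc 0 b,
      HasDerivAt (fun z : ℝ => z ^ (n + 1)) ((n + 1 : ℝ) * x ^ n) x :=
    fun x _ => by simpa using hasDerivAt_pow (n + 1) x
  have hv : ∀ x ∈ Set.uIcc 0 b,
      HasDerivAt (fun z => f (lam * z ^ 2) / (2 * lam)) (x * f' (lam * x ^ 2)) x := by
    intro x _
    have hsq := (hasDerivAt_pow 2 x).const_mul lam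
    refine (((hf _).comp x hsq).div_const (2 * lam)).congr_deriv ?_
    field_simp
    ring
  have parts := intervalIntegral.integral_mul_deriv_eq_deriv_mul hu hv
    ((by fun_prop : Continuous fun x : ℝ => (n + 1 : ℝ) * x ^ n).intervalIntegrable 0 b)
    ((by fun_prop : Continuous fun x => x * f' (lam * x ^ 2)).intervalIntegrable 0 b)
  calc ∫ z in (0:ℝ)..b, z ^ (n + 2) * f' (lam * z ^ 2)
      = ∫ z in (0:ℝ)..b, z ^ (n + 1) * (z * f' (lam * z ^ 2)) := by
        congr 1; ext z; ring
    _ = b ^ (n + 1) * (f (lam * b ^ 2) / (2 * lam))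
          - ∫ z in (0:ℝ)..b, (n + 1) / (2 * lam) * (z ^ n * f (lam * z ^ 2)) := by
        rw [parts]; simp only [zero_pow n.succ_ne_zero, zero_mul, sub_zero]
        congr 2; ext z; ring
    _ = _ := by rw [intervalIntegral.integral_const_mul]; ring

theorem integral_pow_add_two_mul_sin_mul_sq {lam : ℝ} (hlam : lam ≠ 0) (n : ℕ) :
    ∫ z in (0:ℝ)..1, z ^ (n + 2) * sin (lam * z ^ 2) =
      -cos lam / (2 * lam)
        + (n + 1) / (2 * lam) * ∫ z in (0:ℝ)..1, z ^ n * cos (lam * z ^ 2) := by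
  have := integral_pow_add_two_mul_comp_mul_sq (f := fun x => -cos x)
    (fun x => by simpa using (hasDerivAt_cos x).fun_neg) continuous_sin hlam n 1
  simp only [one_pow, one_mul, mul_one, mul_neg, intervalIntegral.integral_neg] at this
  rw [this]; ring

theorem integral_pow_add_two_mul_cos_mul_sq {lam : ℝ} (hlam : lam ≠ 0) (n : ℕ) :
    ∫ z in (0:ℝ)..1, z ^ (n + 2) * cos (lam * z ^ 2) =
      sin lam / (2 * lam)
        - (n + 1) / (2 * lam) * ∫ z in (0:ℝ)..1, z ^ n * sin (lam * z ^ 2) := by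
  simpa using integral_pow_add_two_mul_comp_mul_sq hasDerivAt_sin continuous_cos hlam n 1

theorem integral_cos_mul_sq {lam : ℝ} (hlam : 0 < lam) (b : ℝ) :
    ∫ z in (0:ℝ)..b, cos (lam * z ^ 2) =
      √(π / (2 * lam)) * fresnelC (b * √(2 * lam / π)) := by
  have hc : 0 < √(2 * lam / π) := sqrt_pos.2 (by positivity)
  have hscale : ∀ z, cos (π * (z * √(2 * lam / π)) ^ 2 / 2) = cos (lam * z ^ 2) := fun z => by
    rw [mul_pow, sq_sqrt (by positivity)]; field_simp
  have := intervalIntegral.integral_comp_mul_right (a := 0) (b := b)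
    (fun t => cos (π * t ^ 2 / 2)) hc.ne'
  simp only [hscale, zero_mul, smul_eq_mul] at this
  rw [this, fresnelC, ← sqrt_inv, inv_div]

noncomputable def sinSqMomentFormula (lam : ℝ) (m : ℕ) : ℝ :=
  ((-1 : ℝ) ^ m * Gamma (2 * m + 3 / 2) / (2 * lam ^ (2 * m + 1))) *
    (√(2 / lam) * fresnelC √(2 * lam / π)
      - lam * sin lam * ∑ j ∈ range m, (-1 : ℝ) ^ j * lam ^ (2 * j) / Gamma (2 * j + 5 / 2)
      - cos lam * ∑ j ∈ range (m + 1), (-1 : ℝ) ^ j * lam ^ (2 * j) / Gamma (2 * j + 3 / 2))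

theorem sinSqMomentFormula_zero {lam : ℝ} (hlam : 0 < lam) :
    sinSqMomentFormula lam 0 =
      -cos lam / (2 * lam)
        + 1 / (2 * lam) * (√(π / (2 * lam)) * fresnelC √(2 * lam / π)) := by
  have hGamma : Gamma (3 / 2) = √π / 2 := by
    rw [show (3 / 2 : ℝ) = 1 / 2 + 1 by norm_num, Gamma_add_one (by norm_num), Gamma_one_half_eq]
    ring
  have hsqrt : √(π / (2 * lam)) = √π / 2 * √(2 / lam) := by
    rw [show π / (2 * lam) = π / 2 ^ 2 * (2 / lam) by field_simp, sqrt_mul (by positivity),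
      sqrt_div' _ (by positivity), sqrt_sq zero_le_two]
  norm_num [sinSqMomentFormula, hGamma, hsqrt]
  field_simp
  ring

theorem sinSqMomentFormula_succ {lam : ℝ} (hlam : lam ≠ 0) (m : ℕ) :
    sinSqMomentFormula lam (m + 1) =
      -cos lam / (2 * lam) + (4 * m + 5) / (2 * lam) *
        (sin lam / (2 * lam) - (4 * m + 3) / (2 * lam) * sinSqMomentFormula lam m) := by
  have hGamma52 : Gamma (2 * m + 5 / 2) = (2 * m + 3 / 2) * Gamma (2 * m + 3 / 2) := by
    rw [show (2 * m + 5 / 2 : ℝ) = 2 * m + 3 / 2 + 1 by ring, Gamma_add_one (by positivity)]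
  have hGamma72 : Gamma (2 * (m + 1 : ℕ) + 3 / 2) = (2 * m + 5 / 2) * Gamma (2 * m + 5 / 2) := by
    rw [show (2 * (m + 1 : ℕ) + 3 / 2 : ℝ) = 2 * m + 5 / 2 + 1 by push_cast; ring,
      Gamma_add_one (by positivity)]
  have hG : Gamma (2 * m + 3 / 2) ≠ 0 := (Gamma_pos_of_pos (by positivity)).ne'
  simp only [sinSqMomentFormula, sum_range_succ _ m, sum_range_succ _ (m + 1), hGamma72, hGamma52]
  field_simp
  ring_nf
  rw [show ((-1:ℝ)) ^ (m * 2) = 1 from Even.neg_one_pow ⟨m, by ring⟩]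
  ring

theorem stmt_14 (lam : ℝ) (hlam : 0 < lam) (m : ℕ) :
    ∫ z in (0:ℝ)..1, z ^ (4 * m + 2) * Real.sin (lam * z ^ 2) =
      ((-1 : ℝ) ^ m * Real.Gamma (2 * m + 3 / 2) / (2 * lam ^ (2 * m + 1))) *
        (Real.sqrt (2 / lam) * fresnelC (Real.sqrt (2 * lam / π))
          - lam * Real.sin lam *
              ∑ j ∈ Finset.range m, (-1 : ℝ) ^ j * lam ^ (2 * j) / Real.Gamma (2 * j + 5 / 2)
          - Real.cos lam *
              ∑ j ∈ Finset.range (m + 1), (-1 : ℝ) ^ j * lam ^ (2 * j) / Real.Gamma (2 * j + 3 / 2)) := by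
  change _ = sinSqMomentFormula lam m
  induction m with
  | zero =>
    rw [sinSqMomentFormula_zero hlam, ← one_mul √(2 * lam / π), ← integral_cos_mul_sq hlam]
    simpa using integral_pow_add_two_mul_sin_mul_sq hlam.ne' 0
  | succ m ih =>
    rw [show 4 * (m + 1) + 2 = 4 * m + 2 + 2 + 2 by ring,
      integral_pow_add_two_mul_sin_mul_sq hlam.ne', integral_pow_add_two_mul_cos_mul_sq hlam.ne',
      ih, sinSqMomentFormula_succ hlam.ne']
    push_cast
    ring
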